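/- Let M be a matroid on U, and let f be normalized, monotone, submodular with curvature at most c ∈ (0,1]. Let A = {a_1,…,a_r} and B = {b_1,…,b_r} be two bases of M indexed via Brualdi's bijection so that A − a_i + b_i is a base for each i (and b_i = a_i whenever b_i ∈ A). Then (c e^c/(e^c−1)) f(A) ≥ f(B) + ∑_{i=1}^r [g(A) − g(A − a_i + b_i)], where g(S) = ∑_{T ⊆ S} m_{|S|−1,|T|−1} f(T). -/

import Mathlib

open MeasureTheory Real Finset

noncomputable def mcoef (c : ℝ) (a b : ℤ) : ℝ :=
  if a < 0 ∨ b < 0 then 0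
  else ∫ p in (0:ℝ)..1,
    (c * Real.exp (c * p) / (Real.exp c - 1)) * p ^ b.toNat * (1 - p) ^ (a - b).toNat

noncomputable def harm (k : ℕ) : ℝ := ∑ t ∈ Finset.range k, (1 : ℝ) / (t + 1)

noncomputable def gfun (c : ℝ) {U : Type*} [DecidableEq U] (f : Finset U → ℝ)
    (A : Finset U) : ℝ :=
  ∑ B ∈ A.powerset, mcoef c ((A.card : ℤ) - 1) ((B.card : ℤ) - 1) * f B

/-!
Let `E(p)` be the multilinear extension of `f` at `p • 𝟙_A` and `P(p) = c e^{cp} / (e^c - 1)`.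
The coefficients `m` are moments of the probability density `P` on `[0, 1]`, so each gap
`g(A) - g(A - aᵢ + bᵢ)` is the `P`-average of `E_{A - aᵢ}[f(T + aᵢ) - f(T + bᵢ)]`. Summed over `i`,
the `aᵢ`-part is `E'`, and since `P' = c P` we get `∫ P (c E + E') = ∫ (P E)' = P(1) f(A)`.
For the `bᵢ`-part, submodularity and curvature give `f(B) ≤ c f(R) + ∑ᵢ (f(R - aᵢ + bᵢ) - f(R - aᵢ))`
for every `R ⊆ A`; averaging over a random `R` and then against `P` closes the argument.
-/

section MultilinExt

variable {U : Type*}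

/-- The multilinear extension of `f` at the point `p • 𝟙_s`: the mean of `f` over a random
subset of `s` that contains each element independently with probability `p`. -/
noncomputable def multilinExt (f : Finset U → ℝ) (s : Finset U) (p : ℝ) : ℝ :=
  ∑ T ∈ s.powerset, p ^ #T * (1 - p) ^ (#s - #T) * f T

variable (f g : Finset U → ℝ) (s : Finset U) (p : ℝ)

@[simp] lemma multilinExt_empty : multilinExt f ∅ p = f ∅ := by simp [multilinExt]

variable {f g s} in
lemma multilinExt_congr (h : ∀ T ⊆ s, f T = g T) : multilinExt f s p = multilinExt g s p :=
  sum_congr rfl fun T hT => by rw [h T (mem_powerset.mp hT)]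

lemma multilinExt_sub :
    multilinExt (fun T => f T - g T) s p = multilinExt f s p - multilinExt g s p := by
  simp only [multilinExt, mul_sub, sum_sub_distrib]

lemma multilinExt_add :
    multilinExt (fun T => f T + g T) s p = multilinExt f s p + multilinExt g s p := by
  simp only [multilinExt, mul_add, sum_add_distrib]

lemma multilinExt_const_mul (c : ℝ) :
    multilinExt (fun T => c * f T) s p = c * multilinExt f s p := by
  simp only [multilinExt, mul_sum]
  exact sum_congr rfl fun _ _ => by ring

lemma multilinExt_sum {ι : Type*} (t : Finset ι) (g : ι → Finset U → ℝ) :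
    multilinExt (fun T => ∑ i ∈ t, g i T) s p = ∑ i ∈ t, multilinExt (g i) s p := by
  simp only [multilinExt, mul_sum]
  exact sum_comm

@[fun_prop] lemma continuous_multilinExt : Continuous (multilinExt f s) := by
  unfold multilinExt
  fun_prop

variable [DecidableEq U]

def marginal (f : Finset U → ℝ) (x : U) : Finset U → ℝ := fun T => f (insert x T) - f T

lemma multilinExt_insert {x : U} (hx : x ∉ s) :
    multilinExt f (insert x s) p
      = (1 - p) * multilinExt f s p + p * multilinExt (fun T => f (insert x T)) s p := by
  simp only [multilinExt, sum_powerset_insert hx, mul_sum]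
  congr 1 <;> refine sum_congr rfl fun T hT => ?_
  · have := card_le_card (mem_powerset.mp hT)
    rw [card_insert_of_notMem hx, Nat.sub_add_comm this, pow_succ]
    ring
  · have hxT : x ∉ T := fun h => hx (mem_powerset.mp hT h)
    rw [card_insert_of_notMem hx, card_insert_of_notMem hxT, Nat.add_sub_add_right, pow_succ]
    ring

lemma multilinExt_erase {x : U} (hx : x ∈ s) :
    multilinExt f (s.erase x) p = multilinExt (fun T => f (T.erase x)) s p := by
  have hxs := notMem_erase x s
  rw [← insert_erase hx, multilinExt_insert _ _ _ hxs, erase_insert hxs,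
    multilinExt_congr p (g := f) fun T hT => congrArg f (erase_eq_of_notMem fun h => hxs (hT h)),
    multilinExt_congr p (g := f) fun T hT => congrArg f (erase_insert fun h => hxs (hT h))]
  ring

lemma multilinExt_one : multilinExt f s 1 = f s := by
  induction s using Finset.induction_on generalizing f with
  | empty => simp
  | insert x s hx ih => simp [multilinExt_insert _ _ _ hx, ih]

lemma multilinExt_zero : multilinExt f s 0 = f ∅ := by
  induction s using Finset.induction_on generalizing f with
  | empty => simp
  | insert x s hx ih => simp [multilinExt_insert _ _ _ hx, ih]

variable {f s p} in
lemma le_multilinExt {m : ℝ} (hp0 : 0 ≤ p) (hp1 : p ≤ 1) (h : ∀ T ⊆ s, m ≤ f T) :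
    m ≤ multilinExt f s p := by
  induction s using Finset.induction_on generalizing f with
  | empty => simpa using h ∅ subset_rfl
  | insert x s hx ih =>
    rw [multilinExt_insert _ _ _ hx]
    have h₁ := ih fun T hT => h T (hT.trans (subset_insert x s))
    have h₂ := ih (f := fun T => f (insert x T)) fun T hT => h _ (insert_subset_insert x hT)
    nlinarith

lemma hasDerivAt_multilinExt :
    HasDerivAt (multilinExt f s) (∑ x ∈ s, multilinExt (marginal f x) (s.erase x) p) p := by
  induction s using Finset.induction_on generalizing f with
  | empty => simpa [funext (multilinExt_empty f)] using hasDerivAt_const p (f ∅)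
  | insert x s hx ih =>
    have hfun : multilinExt f (insert x s)
        = fun q => (1 - q) * multilinExt f s q + q * multilinExt (fun T => f (insert x T)) s q :=
      funext fun q => multilinExt_insert f s q hx
    have hterm : ∀ y ∈ s, multilinExt (marginal f y) ((insert x s).erase y) p
        = (1 - p) * multilinExt (marginal f y) (s.erase y) p
          + p * multilinExt (marginal (fun T => f (insert x T)) y) (s.erase y) p := by
      intro y hy
      have hxy : x ≠ y := fun h => hx (h ▸ hy)
      rw [erase_insert_of_ne hxy, multilinExt_insert _ _ _ fun h => hx (mem_of_mem_erase h)]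
      unfold marginal
      simp only [insert_comm y x]
    rw [hfun]
    refine ((((hasDerivAt_id' p).const_sub 1).fun_mul (ih f)).fun_add
      ((hasDerivAt_id' p).fun_mul (ih fun T => f (insert x T)))).congr_deriv ?_
    rw [sum_insert hx, erase_insert hx, sum_congr rfl hterm, sum_add_distrib, ← mul_sum,
      ← mul_sum]
    unfold marginal
    rw [multilinExt_sub]
    ring

end MultilinExt

section Submodular

variable {U : Type*} [DecidableEq U] {f : Finset U → ℝ}

lemma marginal_le_marginal_of_subset
    (hsub : ∀ X Y : Finset U, f X + f Y ≥ f (X ∪ Y) + f (X ∩ Y))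
    {S T : Finset U} {y : U} (hST : S ⊆ T) (hy : y ∉ T) : marginal f y T ≤ marginal f y S := by
  have h := hsub (insert y S) T
  rw [insert_union, union_eq_right.mpr hST, insert_inter_of_notMem hy,
    inter_eq_left.mpr hST] at h
  unfold marginal
  linarith

lemma sub_le_sum_marginal (hsub : ∀ X Y : Finset U, f X + f Y ≥ f (X ∪ Y) + f (X ∩ Y))
    (R S : Finset U) : f (R ∪ S) - f R ≤ ∑ y ∈ S, marginal f y R := by
  induction S using Finset.induction_on with
  | empty => simp
  | insert y S hy ih =>
    have h := hsub (R ∪ S) (insert y R)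
    have hU : R ∪ S ∪ insert y R = R ∪ insert y S := by grind
    have hI : (R ∪ S) ∩ insert y R = R := by grind
    rw [hU, hI] at h
    rw [sum_insert hy]
    unfold marginal at ih ⊢
    linarith

lemma apply_le_sum_apply_singleton (hnorm : f ∅ = 0)
    (hsub : ∀ X Y : Finset U, f X + f Y ≥ f (X ∪ Y) + f (X ∩ Y)) (S : Finset U) :
    f S ≤ ∑ x ∈ S, f {x} := by
  induction S using Finset.induction_on with
  | empty => simp [hnorm]
  | insert y S hy ih =>
    have h := hsub S {y}
    rw [union_singleton, inter_singleton_of_notMem hy, hnorm] at h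
    rw [sum_insert hy]
    linarith

lemma one_sub_mul_le_marginal_erase {c : ℝ}
    (hcurv : ∀ X Y : Finset U, Disjoint X Y → f (X ∪ Y) ≥ f X + (1 - c) * f Y)
    {R : Finset U} {x : U} (hx : x ∈ R) : (1 - c) * f {x} ≤ marginal f x (R.erase x) := by
  have h := hcurv (R.erase x) {x} (disjoint_singleton_right.mpr (notMem_erase x R))
  rw [union_singleton, insert_erase hx] at h
  unfold marginal
  rw [insert_erase hx]
  linarith

lemma le_mul_add_sum_marginal_exchange {c : ℝ} (hc1 : c ≤ 1) (hnorm : f ∅ = 0)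
    (hsub : ∀ X Y : Finset U, f X + f Y ≥ f (X ∪ Y) + f (X ∩ Y))
    (hcurv : ∀ X Y : Finset U, Disjoint X Y → f (X ∪ Y) ≥ f X + (1 - c) * f Y)
    {r : ℕ} {a b : Fin r → U} (hb : Function.Injective b) {R : Finset U}
    (hfix : ∀ i, b i ∈ R → b i = a i) :
    f (univ.image b) ≤ c * f R + ∑ i, marginal f (b i) (R.erase (a i)) := by
  set B := univ.image b
  have hterm : ∀ i ∈ univ, (if b i ∈ R then (1 - c) * f {b i} else marginal f (b i) R)
      ≤ marginal f (b i) (R.erase (a i)) := by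
    intro i _
    split_ifs with hbR
    · have hba := hfix i hbR
      rw [hba] at hbR ⊢
      exact one_sub_mul_le_marginal_erase hcurv hbR
    · exact marginal_le_marginal_of_subset hsub (erase_subset _ _) hbR
  have hsplit : ∑ i, (if b i ∈ R then (1 - c) * f {b i} else marginal f (b i) R)
      = (1 - c) * ∑ y ∈ B ∩ R, f {y} + ∑ y ∈ B \ R, marginal f y R := by
    rw [← sum_image (f := fun y => if y ∈ R then (1 - c) * f {y} else marginal f y R)
      hb.injOn, sum_ite, filter_mem_eq_inter, filter_notMem_eq_sdiff, mul_sum]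
  have hinter := apply_le_sum_apply_singleton hnorm hsub (B ∩ R)
  have hunion := sub_le_sum_marginal hsub R (B \ R)
  rw [union_sdiff_self_eq_union] at hunion
  have hcurvB := hcurv B (R \ B) disjoint_sdiff
  rw [union_sdiff_self_eq_union, union_comm] at hcurvB
  have hR := hsub (R \ B) (R ∩ B)
  rw [sdiff_union_inter, disjoint_iff_inter_eq_empty.mp (disjoint_sdiff_inter R B), hnorm,
    inter_comm R B] at hR
  have hsum := sum_le_sum hterm
  rw [hsplit] at hsum
  nlinarith [mul_le_mul_of_nonneg_left hinter (sub_nonneg.mpr hc1),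
    mul_le_mul_of_nonneg_left hR (sub_nonneg.mpr hc1)]

end Submodular

section Density

noncomputable def expDensity (c p : ℝ) : ℝ := c * exp (c * p) / (exp c - 1)

@[fun_prop] lemma continuous_expDensity (c : ℝ) : Continuous (expDensity c) := by
  unfold expDensity
  fun_prop

lemma expDensity_nonneg {c : ℝ} (hc : 0 ≤ c) (p : ℝ) : 0 ≤ expDensity c p :=
  div_nonneg (by positivity) (by linarith [add_one_le_exp c])

lemma hasDerivAt_expDensity (c p : ℝ) : HasDerivAt (expDensity c) (c * expDensity c p) p :=
  ((((hasDerivAt_id p).const_mul c).exp.const_mul c).div_const (exp c - 1)).congr_deriv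
    (by simp only [expDensity, id]; ring)

lemma integral_expDensity {c : ℝ} (hc : c ≠ 0) : ∫ p in (0:ℝ)..1, expDensity c p = 1 := by
  have hderiv : ∀ p, HasDerivAt (fun q => exp (c * q) / (exp c - 1)) (expDensity c p) p :=
    fun p => (((hasDerivAt_id p).const_mul c).exp.div_const (exp c - 1)).congr_deriv
      (by simp only [expDensity, id]; ring)
  have hne : exp c - 1 ≠ 0 := sub_ne_zero.mpr fun h => hc (exp_eq_one_iff c |>.mp h)
  rw [intervalIntegral.integral_eq_sub_of_hasDerivAt (fun p _ => hderiv p)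
    ((continuous_expDensity c).intervalIntegrable 0 1)]
  field_simp
  simp

lemma mcoef_natCast (c : ℝ) {n k : ℕ} (hk : k ≤ n) :
    mcoef c n k = ∫ p in (0:ℝ)..1, expDensity c p * p ^ k * (1 - p) ^ (n - k) := by
  rw [mcoef, if_neg (by omega), ← Nat.cast_sub hk]
  simp only [Int.toNat_natCast, expDensity]

end Density

section GFun

variable {U : Type*}

lemma sum_mcoef_mul_eq_integral (c : ℝ) (h : Finset U → ℝ) (s : Finset U) :
    ∑ T ∈ s.powerset, mcoef c #s #T * h T
      = ∫ p in (0:ℝ)..1, expDensity c p * multilinExt h s p := by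
  simp only [multilinExt, mul_sum]
  rw [intervalIntegral.integral_finsetSum fun T _ =>
    Continuous.intervalIntegrable (by fun_prop) _ _]
  refine sum_congr rfl fun T hT => ?_
  rw [mcoef_natCast c (card_le_card (mem_powerset.mp hT)), ← intervalIntegral.integral_mul_const]
  congr 1
  ext p
  ring

variable [DecidableEq U]

lemma gfun_insert (c : ℝ) (f : Finset U → ℝ) {s : Finset U} {x : U} (hx : x ∉ s) :
    gfun c f (insert x s) = ∑ T ∈ s.powerset, mcoef c #s (#T - 1) * f T
      + ∫ p in (0:ℝ)..1, expDensity c p * multilinExt (fun T => f (insert x T)) s p := by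
  rw [← sum_mcoef_mul_eq_integral, gfun, sum_powerset_insert hx, card_insert_of_notMem hx]
  refine congr_arg₂ (· + ·) (sum_congr rfl fun T _ => ?_) (sum_congr rfl fun T hT => ?_)
  · push_cast
    ring_nf
  · rw [card_insert_of_notMem fun h => hx (mem_powerset.mp hT h)]
    push_cast
    ring_nf

lemma gfun_sub_gfun_exchange (c : ℝ) (f : Finset U → ℝ) {A : Finset U} {x y : U} (hx : x ∈ A)
    (hy : y ∈ A → y = x) :
    gfun c f A - gfun c f (insert y (A.erase x)) = ∫ p in (0:ℝ)..1, expDensity c p *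
      (multilinExt (marginal f x) (A.erase x) p - multilinExt (marginal f y) (A.erase x) p) := by
  by_cases hyA : y ∈ A
  · obtain rfl := hy hyA
    simp [insert_erase hx]
  have hgA := gfun_insert c f (notMem_erase x A)
  rw [insert_erase hx] at hgA
  rw [hgA, gfun_insert c f fun h => hyA (mem_of_mem_erase h), add_sub_add_left_eq_sub,
    ← intervalIntegral.integral_sub (Continuous.intervalIntegrable (by fun_prop) _ _)
      (Continuous.intervalIntegrable (by fun_prop) _ _)]
  congr 1
  ext p
  unfold marginal
  rw [multilinExt_sub, multilinExt_sub]
  ring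

end GFun

section Averaging

variable {U : Type*} [DecidableEq U]

lemma integral_expDensity_mul_multilinExt (c : ℝ) (f : Finset U → ℝ) (A : Finset U) :
    ∫ p in (0:ℝ)..1, expDensity c p *
        (c * multilinExt f A p + ∑ x ∈ A, multilinExt (marginal f x) (A.erase x) p)
      = expDensity c 1 * f A - expDensity c 0 * f ∅ := by
  rw [intervalIntegral.integral_eq_sub_of_hasDerivAt
      (f := fun p => expDensity c p * multilinExt f A p)
      (fun p _ => ((hasDerivAt_expDensity c p).mul (hasDerivAt_multilinExt f A p)).congr_deriv
        (by ring))
      (Continuous.intervalIntegrable (by fun_prop) _ _),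
    multilinExt_one, multilinExt_zero]

lemma le_mul_multilinExt_add_sum_marginal_exchange {c : ℝ} (hc1 : c ≤ 1)
    {f : Finset U → ℝ} (hnorm : f ∅ = 0)
    (hsub : ∀ X Y : Finset U, f X + f Y ≥ f (X ∪ Y) + f (X ∩ Y))
    (hcurv : ∀ X Y : Finset U, Disjoint X Y → f (X ∪ Y) ≥ f X + (1 - c) * f Y)
    {r : ℕ} {a b : Fin r → U} (hb : Function.Injective b) {A : Finset U}
    (haA : ∀ i, a i ∈ A) (hfix : ∀ i, b i ∈ A → b i = a i) {p : ℝ} (hp0 : 0 ≤ p) (hp1 : p ≤ 1) :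
    f (univ.image b)
      ≤ c * multilinExt f A p + ∑ i, multilinExt (marginal f (b i)) (A.erase (a i)) p := by
  simp only [multilinExt_erase _ _ _ (haA _)]
  rw [← multilinExt_const_mul, ← multilinExt_sum, ← multilinExt_add]
  exact le_multilinExt hp0 hp1 fun R hR =>
    le_mul_add_sum_marginal_exchange hc1 hnorm hsub hcurv hb fun i hi => hfix i (hR hi)

lemma sum_gfun_sub_gfun_exchange (c : ℝ) (f : Finset U → ℝ) {r : ℕ} {a b : Fin r → U}
    {A : Finset U} (haA : ∀ i, a i ∈ A) (hfix : ∀ i, b i ∈ A → b i = a i) :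
    ∑ i, (gfun c f A - gfun c f (insert (b i) (A.erase (a i))))
      = ∫ p in (0:ℝ)..1, expDensity c p * (∑ i, multilinExt (marginal f (a i)) (A.erase (a i)) p
          - ∑ i, multilinExt (marginal f (b i)) (A.erase (a i)) p) := by
  simp only [gfun_sub_gfun_exchange c f (haA _) (hfix _), ← sum_sub_distrib, mul_sum]
  rw [intervalIntegral.integral_finsetSum fun i _ =>
    Continuous.intervalIntegrable (by fun_prop) _ _]

lemma le_integral_expDensity_mul_exchange {c : ℝ} (hc0 : 0 < c) (hc1 : c ≤ 1)
    {f : Finset U → ℝ} (hnorm : f ∅ = 0)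
    (hsub : ∀ X Y : Finset U, f X + f Y ≥ f (X ∪ Y) + f (X ∩ Y))
    (hcurv : ∀ X Y : Finset U, Disjoint X Y → f (X ∪ Y) ≥ f X + (1 - c) * f Y)
    {r : ℕ} {a b : Fin r → U} (hb : Function.Injective b) {A : Finset U}
    (haA : ∀ i, a i ∈ A) (hfix : ∀ i, b i ∈ A → b i = a i) :
    f (univ.image b) ≤ ∫ p in (0:ℝ)..1, expDensity c p *
      (c * multilinExt f A p + ∑ i, multilinExt (marginal f (b i)) (A.erase (a i)) p) :=
  calc f (univ.image b) = ∫ p in (0:ℝ)..1, expDensity c p * f (univ.image b) := by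
        rw [intervalIntegral.integral_mul_const, integral_expDensity hc0.ne', one_mul]
    _ ≤ _ := intervalIntegral.integral_mono_on zero_le_one
        (Continuous.intervalIntegrable (by fun_prop) _ _)
        (Continuous.intervalIntegrable (by fun_prop) _ _) fun p ⟨hp0, hp1⟩ =>
          mul_le_mul_of_nonneg_left (le_mul_multilinExt_add_sum_marginal_exchange hc1 hnorm hsub
            hcurv hb haA hfix hp0 hp1) (expDensity_nonneg hc0.le p)

end Averaging

theorem stmt_17_general (c : ℝ) (hc0 : 0 < c) (hc1 : c ≤ 1) {U : Type*} [DecidableEq U]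
    (f : Finset U → ℝ)
    (hnorm : f ∅ = 0)
    (hsub : ∀ A B : Finset U, f A + f B ≥ f (A ∪ B) + f (A ∩ B))
    (hcurv : ∀ X Y : Finset U, Disjoint X Y → f (X ∪ Y) ≥ f X + (1 - c) * f Y)
    (r : ℕ) (a b : Fin r → U)
    (hainj : Function.Injective a) (hbinj : Function.Injective b)
    (A B : Finset U)
    (hA : A = Finset.image a Finset.univ) (hB : B = Finset.image b Finset.univ)
    (hfix : ∀ i : Fin r, b i ∈ A → b i = a i) :
    c * Real.exp c / (Real.exp c - 1) * f A ≥
      f B + ∑ i : Fin r, (gfun c f A - gfun c f (insert (b i) (A.erase (a i)))) := by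
  subst hB
  have haA : ∀ i, a i ∈ A := fun i => hA ▸ mem_image_of_mem a (mem_univ i)
  have hreindex : ∀ p, ∑ x ∈ A, multilinExt (marginal f x) (A.erase x) p
      = ∑ i, multilinExt (marginal f (a i)) (A.erase (a i)) p := fun p => by
    subst hA
    exact sum_image hainj.injOn
  rw [sum_gfun_sub_gfun_exchange c f haA hfix, ge_iff_le]
  refine (add_le_add_left (le_integral_expDensity_mul_exchange hc0 hc1 hnorm hsub hcurv hbinj
    haA hfix) _).trans_eq ?_
  rw [← intervalIntegral.integral_add (Continuous.intervalIntegrable ?_ _ _)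
    (Continuous.intervalIntegrable ?_ _ _)]
  · simp only [← mul_add, add_add_sub_cancel, ← hreindex]
    rw [integral_expDensity_mul_multilinExt, hnorm, expDensity, mul_one, mul_zero, sub_zero]
  all_goals fun_prop

theorem stmt_17 (c : ℝ) (hc0 : 0 < c) (hc1 : c ≤ 1) {U : Type*} [DecidableEq U]
    (M : Matroid U)
    (f : Finset U → ℝ)
    (hnorm : f ∅ = 0)
    (hmono : ∀ A B : Finset U, A ⊆ B → f A ≤ f B)
    (hsub : ∀ A B : Finset U, f A + f B ≥ f (A ∪ B) + f (A ∩ B))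
    (hcurv : ∀ X Y : Finset U, Disjoint X Y → f (X ∪ Y) ≥ f X + (1 - c) * f Y)
    (r : ℕ) (a b : Fin r → U)
    (hainj : Function.Injective a) (hbinj : Function.Injective b)
    (A B : Finset U)
    (hA : A = Finset.image a Finset.univ) (hB : B = Finset.image b Finset.univ)
    (hAbase : M.IsBase (A : Set U)) (hBbase : M.IsBase (B : Set U))
    (hswap : ∀ i : Fin r, M.IsBase ((insert (b i) (A.erase (a i)) : Finset U) : Set U))
    (hfix : ∀ i : Fin r, b i ∈ A → b i = a i) :
    c * Real.exp c / (Real.exp c - 1) * f A ≥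
      f B + ∑ i : Fin r, (gfun c f A - gfun c f (insert (b i) (A.erase (a i)))) :=
  stmt_17_general c hc0 hc1 f hnorm hsub hcurv r a b hainj hbinj A B hA hB hfix
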